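/- arXiv:2012.02444 — 5 statements merged into one kernel-verified Lean document; each statement's English description precedes it below -/
import Mathlib

section
/- Assume that the sequence (m_n)_{n∈ℕ} converges weakly to m_∞ on V × W × W (i.e. integrals of every bounded continuous real function converge). Then there exists a strictly increasing sequence (n_l)_{l∈ℕ} of natural numbers such that for μ-almost every x ∈ V, the probability measures K_{n_l}(x,·) converge weakly to K_∞(x,·) on W, i.e. for every bounded continuous g : W → ℝ, ∫_W g(y) K_{n_l}(x, dy) → ∫_W g(y) K_∞(x, dy). -/
open MeasureTheory ProbabilityTheory Filter Topology TopologicalSpace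
open scoped ENNReal BoundedContinuousFunction

/-!
Testing `m_n → m_∞` against `ψ(x) g(y) g(z)` and against `ψ(x) g(y)` shows that, for each bounded
continuous `g`, the functions `K_n g : x ↦ ∫ g dK_n(x)` satisfy `‖K_n g‖₂ → ‖K_∞ g‖₂` in `L²(μ)`
and converge weakly to `K_∞ g` (bounded continuous `ψ` are dense in `L¹(μ)` and the `K_n g` are
uniformly bounded). Hence `K_n g → K_∞ g` in `L²(μ)`, so in `μ`-measure.

On a second countable metrizable space, weak convergence of probability measures is determined by
countably many test functions: continuous minorants of indicators of finite unions of basic open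
sets suffice for the liminf inequality of the portmanteau theorem. A diagonal Borel–Cantelli
extraction then yields one subsequence along which `K_n g(x) → K_∞ g(x)` for all these test
functions and `μ`-a.e. `x`.
-/

theorem exists_seq_forall_tendsto_ae_of_tendstoInMeasure {α ι E : Type*} [MeasurableSpace α]
    {μ : Measure α} [Countable ι] [PseudoEMetricSpace E] {f : ι → ℕ → α → E} {g : ι → α → E}
    (hfg : ∀ i, TendstoInMeasure μ (f i) atTop (g i)) :
    ∃ ns : ℕ → ℕ, StrictMono ns ∧
      ∀ᵐ x ∂μ, ∀ i, Tendsto (fun k => f i (ns k) x) atTop (𝓝 (g i x)) := by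
  obtain ⟨e, he⟩ := exists_injective_nat ι
  set ε : ℕ → ℝ≥0∞ := fun k => 2⁻¹ ^ k with hε
  have hε_pos : ∀ k, 0 < ε k := fun k => ENNReal.pow_pos (by simp) k
  have hε_anti : Antitone ε := fun k l hkl => pow_le_pow_right_of_le_one' (by simp) hkl
  -- Stage `k` of the extraction controls the `i` with `e i ≤ k` at precision `ε k`.
  obtain ⟨ns, hns, hclose⟩ := extraction_forall_of_eventually
    (P := fun k n => ∀ i ∈ e ⁻¹' Set.Iic k, μ {x | ε k ≤ edist (f i n x) (g i x)} ≤ ε k)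
    fun k => (eventually_all_finite ((Set.finite_Iic k).preimage he.injOn)).2 fun i _ =>
      ENNReal.tendsto_nhds_zero.1 (hfg i (ε k) (hε_pos k)) (ε k) (hε_pos k)
  refine ⟨ns, hns, ae_all_iff.2 fun i => ?_⟩
  have hsum : ∑' k, μ {x | ε (k + e i) ≤ edist (f i (ns (k + e i)) x) (g i x)} ≠ ∞ := by
    refine ne_top_of_le_ne_top ?_ (ENNReal.tsum_le_tsum fun k =>
      (hclose (k + e i) i (Nat.le_add_left _ _)).trans (hε_anti (Nat.le_add_right k (e i))))
    simp [hε, ENNReal.tsum_geometric, ENNReal.one_sub_inv_two]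
  filter_upwards [ae_eventually_notMem hsum] with x hx
  rw [← tendsto_add_atTop_iff_nat (e i), tendsto_iff_edist_tendsto_0]
  refine tendsto_of_tendsto_of_tendsto_of_le_of_le' tendsto_const_nhds
    ((ENNReal.tendsto_pow_atTop_nhds_zero_of_lt_one (r := 2⁻¹) (by simp)).comp
      (tendsto_add_atTop_nat (e i))) (Eventually.of_forall fun _ => zero_le) ?_
  filter_upwards [hx] with k hk
  exact (not_le.1 hk).le

theorem tendstoInMeasure_of_tendsto_integral_sq_sub {α ι : Type*} [MeasurableSpace α]
    {μ : Measure α} [IsFiniteMeasure μ] {l : Filter ι} {f : ι → α → ℝ} {g : α → ℝ}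
    (hint : ∀ n, Integrable (fun x => (f n x - g x) ^ 2) μ)
    (h : Tendsto (fun n => ∫ x, (f n x - g x) ^ 2 ∂μ) l (𝓝 0)) :
    TendstoInMeasure μ f l g := by
  refine tendstoInMeasure_iff_measureReal_dist.2 fun ε hε => ?_
  have hchebyshev : ∀ n, μ.real {x | ε ≤ dist (f n x) (g x)} ≤
      (∫ x, (f n x - g x) ^ 2 ∂μ) / ε ^ 2 := fun n => by
    rw [le_div_iff₀' (by positivity)]
    refine le_trans ?_ (mul_meas_ge_le_integral_of_nonneg
      (Eventually.of_forall fun x => sq_nonneg _) (hint n) (ε ^ 2))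
    refine mul_le_mul_of_nonneg_left (measureReal_mono fun x hx => ?_) (by positivity)
    simpa [Real.dist_eq, sq_abs] using pow_le_pow_left₀ hε.le hx 2
  simpa using squeeze_zero (fun n => measureReal_nonneg) hchebyshev
    (by simpa using h.div_const (ε ^ 2))

theorem norm_integral_mul_le_of_norm_le {α : Type*} [MeasurableSpace α] {μ : Measure α}
    {f c : α → ℝ} {C : ℝ} (hf : Integrable f μ) (hc : ∀ x, ‖c x‖ ≤ C) :
    ‖∫ x, f x * c x ∂μ‖ ≤ C * ∫ x, ‖f x‖ ∂μ := by
  rw [← integral_const_mul]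
  refine norm_integral_le_of_norm_le (hf.norm.const_mul C) (Eventually.of_forall fun x => ?_)
  rw [norm_mul, mul_comm C]
  exact mul_le_mul_of_nonneg_left (hc x) (norm_nonneg _)

section BoundedSequence

variable {α : Type*} [TopologicalSpace α] [NormalSpace α] [MeasurableSpace α] [BorelSpace α]
  {μ : Measure α} [μ.WeaklyRegular] {a : ℕ → α → ℝ} {b : α → ℝ} {C : ℝ}

theorem tendsto_integral_mul_of_forall_boundedContinuous
    (ha_meas : ∀ n, AEStronglyMeasurable (a n) μ) (hb_meas : AEStronglyMeasurable b μ)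
    (ha : ∀ n x, ‖a n x‖ ≤ C) (hb : ∀ x, ‖b x‖ ≤ C)
    (h : ∀ ψ : α →ᵇ ℝ, Tendsto (fun n => ∫ x, ψ x * a n x ∂μ) atTop (𝓝 (∫ x, ψ x * b x ∂μ)))
    {φ : α → ℝ} (hφ : Integrable φ μ) :
    Tendsto (fun n => ∫ x, φ x * a n x ∂μ) atTop (𝓝 (∫ x, φ x * b x ∂μ)) := by
  refine Metric.tendsto_atTop.2 fun ε hε => ?_
  obtain ⟨δ, hδ, hCδ⟩ := exists_pos_mul_lt (half_pos hε) (2 * |C|)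
  obtain ⟨ψ, hφψ, hψ⟩ := hφ.exists_boundedContinuous_integral_sub_le hδ
  have happrox : ∀ c : α → ℝ, AEStronglyMeasurable c μ → (∀ x, ‖c x‖ ≤ C) →
      dist (∫ x, φ x * c x ∂μ) (∫ x, ψ x * c x ∂μ) ≤ |C| * δ := fun c hc hcC => by
    rw [dist_eq_norm, ← integral_sub (hφ.mul_bdd hc (.of_forall hcC))
      (hψ.mul_bdd hc (.of_forall hcC))]
    simp_rw [← sub_mul]
    refine (norm_integral_mul_le_of_norm_le (hφ.sub hψ) hcC).trans ?_
    exact (mul_le_mul_of_nonneg_right (le_abs_self C)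
      (integral_nonneg fun x => norm_nonneg _)).trans
      (mul_le_mul_of_nonneg_left hφψ (abs_nonneg C))
  obtain ⟨N, hN⟩ := Metric.tendsto_atTop.1 (h ψ) (ε / 2) (half_pos hε)
  refine ⟨N, fun n hn => ?_⟩
  have h₁ := happrox (a n) (ha_meas n) (ha n)
  have h₂ := happrox b hb_meas hb
  have h₃ := hN n hn
  have := dist_triangle4 (∫ x, φ x * a n x ∂μ) (∫ x, ψ x * a n x ∂μ) (∫ x, ψ x * b x ∂μ)
    (∫ x, φ x * b x ∂μ)
  rw [dist_comm (∫ x, ψ x * b x ∂μ)] at this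
  linarith

theorem tendsto_integral_sq_sub_of_tendsto_integral_sq [IsFiniteMeasure μ]
    (ha_meas : ∀ n, AEStronglyMeasurable (a n) μ) (hb_meas : AEStronglyMeasurable b μ)
    (ha : ∀ n x, ‖a n x‖ ≤ C) (hb : ∀ x, ‖b x‖ ≤ C)
    (hsq : Tendsto (fun n => ∫ x, a n x ^ 2 ∂μ) atTop (𝓝 (∫ x, b x ^ 2 ∂μ)))
    (h : ∀ ψ : α →ᵇ ℝ, Tendsto (fun n => ∫ x, ψ x * a n x ∂μ) atTop (𝓝 (∫ x, ψ x * b x ∂μ))) :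
    Tendsto (fun n => ∫ x, (a n x - b x) ^ 2 ∂μ) atTop (𝓝 0) := by
  have ha_int : ∀ n, Integrable (a n) μ := fun n => .of_bound (ha_meas n) C (.of_forall (ha n))
  have hb_int : Integrable b μ := .of_bound hb_meas C (.of_forall hb)
  have hexpand : ∀ n, ∫ x, (a n x - b x) ^ 2 ∂μ =
      ∫ x, a n x ^ 2 ∂μ - 2 * ∫ x, b x * a n x ∂μ + ∫ x, b x ^ 2 ∂μ := fun n => by
    have hab : Integrable (fun x => b x * a n x) μ :=
      hb_int.mul_bdd (ha_meas n) (.of_forall (ha n))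
    have ha2 : Integrable (fun x => a n x ^ 2) μ := by
      simpa only [sq] using (ha_int n).mul_bdd (ha_meas n) (.of_forall (ha n))
    have hb2 : Integrable (fun x => b x ^ 2) μ := by
      simpa only [sq] using hb_int.mul_bdd hb_meas (.of_forall hb)
    have hsq_sub : ∀ x, (a n x - b x) ^ 2 = (a n x ^ 2 - 2 * (b x * a n x)) + b x ^ 2 :=
      fun x => by ring
    simp_rw [hsq_sub]
    rw [integral_add (f := fun x => a n x ^ 2 - 2 * (b x * a n x)) (ha2.sub (hab.const_mul 2)) hb2,
      integral_sub ha2 (hab.const_mul 2), integral_const_mul]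
  have hcross := tendsto_integral_mul_of_forall_boundedContinuous ha_meas hb_meas ha hb h hb_int
  have hlim : ∫ x, b x ^ 2 ∂μ - 2 * ∫ x, b x * b x ∂μ + ∫ x, b x ^ 2 ∂μ = 0 := by
    simp_rw [← sq]; ring
  have := (hsq.sub (hcross.const_mul 2)).add_const (∫ x, b x ^ 2 ∂μ)
  rw [hlim] at this
  simpa only [hexpand] using this

end BoundedSequence

theorem integral_compProd_prod_mul {V W : Type*} [MeasurableSpace V] [MeasurableSpace W]
    (μ : Measure V) [SFinite μ] (κ η : Kernel V W) [IsSFiniteKernel κ] [IsSFiniteKernel η]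
    {ψ : V → ℝ} {g h : W → ℝ}
    (hint : Integrable (fun p : V × W × W => ψ p.1 * g p.2.1 * h p.2.2) (μ ⊗ₘ (κ ×ₖ η))) :
    ∫ p : V × W × W, ψ p.1 * g p.2.1 * h p.2.2 ∂(μ ⊗ₘ (κ ×ₖ η)) =
      ∫ x, ψ x * (∫ y, g y ∂κ x) * ∫ z, h z ∂η x ∂μ := by
  rw [Measure.integral_compProd hint]
  congr with x
  simp_rw [Kernel.prod_apply, mul_assoc, integral_const_mul, integral_prod_mul]

section KernelSequence

variable {V W : Type*}
  [TopologicalSpace V] [PolishSpace V] [MeasurableSpace V] [BorelSpace V]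
  [TopologicalSpace W] [PolishSpace W] [MeasurableSpace W] [BorelSpace W]
  {μ : Measure V} [IsProbabilityMeasure μ] {K : ℕ → Kernel V W} {Kinf : Kernel V W}
  [∀ n, IsMarkovKernel (K n)] [IsMarkovKernel Kinf]

theorem tendsto_integral_mul_integral_kernel_mul
    (hconv : ∀ f : V × W × W →ᵇ ℝ,
      Tendsto (fun n => ∫ p, f p ∂(μ ⊗ₘ ((K n) ×ₖ (K n)))) atTop
        (𝓝 (∫ p, f p ∂(μ ⊗ₘ (Kinf ×ₖ Kinf)))))
    (ψ : V →ᵇ ℝ) (g h : W →ᵇ ℝ) :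
    Tendsto (fun n => ∫ x, ψ x * (∫ y, g y ∂K n x) * ∫ z, h z ∂K n x ∂μ) atTop
      (𝓝 (∫ x, ψ x * (∫ y, g y ∂Kinf x) * ∫ z, h z ∂Kinf x ∂μ)) := by
  let F : V × W × W →ᵇ ℝ := ψ.compContinuous .fst *
    g.compContinuous (.comp .fst .snd) * h.compContinuous (.comp .snd .snd)
  have hF : ∀ κ : Kernel V W, [IsMarkovKernel κ] → ∫ p, F p ∂(μ ⊗ₘ (κ ×ₖ κ)) =
      ∫ x, ψ x * (∫ y, g y ∂κ x) * ∫ z, h z ∂κ x ∂μ := fun κ _ =>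
    integral_compProd_prod_mul μ κ κ (F.integrable _)
  simpa only [hF] using hconv F

theorem tendstoInMeasure_integral_kernel
    (hconv : ∀ f : V × W × W →ᵇ ℝ,
      Tendsto (fun n => ∫ p, f p ∂(μ ⊗ₘ ((K n) ×ₖ (K n)))) atTop
        (𝓝 (∫ p, f p ∂(μ ⊗ₘ (Kinf ×ₖ Kinf)))))
    (g : W →ᵇ ℝ) :
    TendstoInMeasure μ (fun n x => ∫ y, g y ∂K n x) atTop (fun x => ∫ y, g y ∂Kinf x) := by
  have hmeas : ∀ κ : Kernel V W, AEStronglyMeasurable (fun x => ∫ y, g y ∂κ x) μ := fun κ =>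
    (g.continuous.stronglyMeasurable.integral_kernel (κ := κ)).aestronglyMeasurable
  have hsq := tendsto_integral_mul_integral_kernel_mul hconv 1 g g
  have hweak := fun ψ => tendsto_integral_mul_integral_kernel_mul hconv ψ g 1
  simp only [BoundedContinuousFunction.coe_one, Pi.one_apply, one_mul, ← sq] at hsq
  simp only [BoundedContinuousFunction.coe_one, Pi.one_apply, integral_const, probReal_univ,
    smul_eq_mul, mul_one] at hweak
  refine tendstoInMeasure_of_tendsto_integral_sq_sub (fun n => ?_)
    (tendsto_integral_sq_sub_of_tendsto_integral_sq (fun n => hmeas (K n)) (hmeas Kinf)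
      (fun n x => g.norm_integral_le_norm (K n x)) (fun x => g.norm_integral_le_norm (Kinf x))
      hsq hweak)
  refine .of_bound (((hmeas (K n)).sub (hmeas Kinf)).pow 2) ((2 * ‖g‖) ^ 2)
    (.of_forall fun x => ?_)
  rw [norm_pow, two_mul]
  gcongr
  exact (norm_sub_le _ _).trans
    (add_le_add (g.norm_integral_le_norm (K n x)) (g.norm_integral_le_norm (Kinf x)))

end KernelSequence

section OpenApprox

variable {W : Type*} [PseudoMetricSpace W]

/-- Since `infDist y ∅ = 0`, these functions vanish identically for `U = univ`. -/
noncomputable def openApprox (U : Set W) (m : ℕ) : W →ᵇ ℝ :=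
  .mkOfBound ⟨fun y => min 1 (m * Metric.infDist y Uᶜ), by fun_prop⟩ 1 fun y z => by
    have h01 : ∀ y, 0 ≤ min 1 (m * Metric.infDist y Uᶜ) ∧ min 1 (m * Metric.infDist y Uᶜ) ≤ 1 :=
      fun y => ⟨le_min zero_le_one (mul_nonneg m.cast_nonneg Metric.infDist_nonneg),
        min_le_left _ _⟩
    simp only [ContinuousMap.coe_mk, Real.dist_eq, abs_sub_le_iff]
    constructor <;> linarith [h01 y, h01 z]

theorem openApprox_apply (U : Set W) (m : ℕ) (y : W) :
    openApprox U m y = min 1 (m * Metric.infDist y Uᶜ) := rfl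

theorem norm_openApprox_apply_le_one (U : Set W) (m : ℕ) (y : W) : ‖openApprox U m y‖ ≤ 1 := by
  rw [openApprox_apply, Real.norm_of_nonneg
    (le_min zero_le_one (mul_nonneg m.cast_nonneg Metric.infDist_nonneg))]
  exact min_le_left _ _

theorem openApprox_le_indicator (U : Set W) (m : ℕ) (y : W) :
    openApprox U m y ≤ U.indicator 1 y := by
  by_cases hy : y ∈ U
  · simp [openApprox_apply, hy]
  · simp [openApprox_apply, hy, Metric.infDist_zero_of_mem (Set.mem_compl hy)]

theorem tendsto_openApprox {U : Set W} (hU : IsOpen U) (hUc : Uᶜ.Nonempty) (y : W) :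
    Tendsto (fun m => openApprox U m y) atTop (𝓝 (U.indicator 1 y)) := by
  by_cases hy : y ∈ U
  · have hpos : 0 < Metric.infDist y Uᶜ :=
      (hU.isClosed_compl.notMem_iff_infDist_pos hUc).1 (not_not_intro hy)
    have hlarge : ∀ᶠ m : ℕ in atTop, 1 ≤ m * Metric.infDist y Uᶜ :=
      (tendsto_natCast_atTop_atTop.atTop_mul_const hpos).eventually_ge_atTop 1
    refine tendsto_const_nhds.congr' ?_
    filter_upwards [hlarge] with m hm
    simp [openApprox_apply, hy, min_eq_left hm]
  · simp [openApprox_apply, hy, Metric.infDist_zero_of_mem (Set.mem_compl hy)]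

variable [MeasurableSpace W] [OpensMeasurableSpace W]

theorem measure_le_liminf_of_tendsto_integral_openApprox {ν : Measure W} {νs : ℕ → Measure W}
    [IsProbabilityMeasure ν] [∀ l, IsProbabilityMeasure (νs l)] {U : Set W} (hU : IsOpen U)
    (h : ∀ m, Tendsto (fun l => ∫ y, openApprox U m y ∂νs l) atTop
      (𝓝 (∫ y, openApprox U m y ∂ν))) :
    ν U ≤ atTop.liminf fun l => νs l U := by
  rcases Uᶜ.eq_empty_or_nonempty with hUc | hUc
  · simp [Set.compl_empty_iff.1 hUc]
  have hint : ∀ (ρ : Measure W) [IsProbabilityMeasure ρ] m,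
      ∫ y, openApprox U m y ∂ρ ≤ ρ.real U := fun ρ _ m => by
    rw [← integral_indicator_one hU.measurableSet]
    exact integral_mono ((openApprox U m).integrable ρ)
      ((integrable_const 1).indicator hU.measurableSet) (openApprox_le_indicator U m)
  have hlim : Tendsto (fun m => ∫ y, openApprox U m y ∂ν) atTop (𝓝 (ν.real U)) := by
    rw [← integral_indicator_one hU.measurableSet]
    exact tendsto_integral_of_dominated_convergence 1
      (fun m => (openApprox U m).continuous.aestronglyMeasurable) (integrable_const 1)
      (fun m => .of_forall (norm_openApprox_apply_le_one U m))
      (.of_forall (tendsto_openApprox hU hUc))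
  have hle : ∀ m, ENNReal.ofReal (∫ y, openApprox U m y ∂ν) ≤ atTop.liminf fun l => νs l U := by
    intro m
    rw [← ((ENNReal.continuous_ofReal.tendsto _).comp (h m)).liminf_eq]
    refine liminf_le_liminf (Eventually.of_forall fun l => ?_)
    simpa [ofReal_measureReal] using ENNReal.ofReal_le_ofReal (hint (νs l) m)
  simpa [ofReal_measureReal] using
    le_of_tendsto' ((ENNReal.continuous_ofReal.tendsto _).comp hlim) hle

theorem tendsto_of_forall_tendsto_integral_openApprox [SecondCountableTopology W]
    {B : Set (Set W)} (hB : IsTopologicalBasis B) {ν : ProbabilityMeasure W}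
    {νs : ℕ → ProbabilityMeasure W}
    (h : ∀ s : Finset (Set W), ↑s ⊆ B → ∀ m,
      Tendsto (fun l => ∫ y, openApprox (⋃ t ∈ s, t) m y ∂νs l) atTop
        (𝓝 (∫ y, openApprox (⋃ t ∈ s, t) m y ∂ν))) :
    Tendsto νs atTop (𝓝 ν) := by
  refine tendsto_of_forall_isOpen_le_liminf_nat' fun G hG =>
    ENNReal.le_of_forall_nnreal_lt fun r hr => ?_
  rw [← ProbabilityMeasure.ennreal_coeFn_eq_coeFn_toMeasure, ENNReal.coe_lt_coe] at hr
  obtain ⟨s, hsB, hrs, hsG⟩ := ν.exists_lt_measure_biUnion_of_isOpen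
    (fun u hu x hx => (hB.exists_subset_of_mem_open hx hu).imp fun v hv =>
      ⟨hv.1, (hB.isOpen hv.1).mem_nhds hv.2.1, hv.2.2⟩) hG hr
  calc (r : ℝ≥0∞) ≤ (ν : Measure W) (⋃ t ∈ s, t) := by
        rw [← ProbabilityMeasure.ennreal_coeFn_eq_coeFn_toMeasure]; exact_mod_cast hrs.le
    _ ≤ atTop.liminf fun l => (νs l : Measure W) (⋃ t ∈ s, t) :=
        measure_le_liminf_of_tendsto_integral_openApprox
          (isOpen_biUnion fun t ht => hB.isOpen (hsB t ht)) (h s hsB)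
    _ ≤ atTop.liminf fun l => (νs l : Measure W) G :=
        liminf_le_liminf (.of_forall fun l => measure_mono hsG)

end OpenApprox

theorem exists_countable_tendsto_of_forall_tendsto_integral (W : Type*) [TopologicalSpace W]
    [PseudoMetrizableSpace W] [SecondCountableTopology W] [MeasurableSpace W]
    [OpensMeasurableSpace W] :
    ∃ T : Set (W →ᵇ ℝ), T.Countable ∧
      ∀ {ν : ProbabilityMeasure W} {νs : ℕ → ProbabilityMeasure W},
        (∀ f ∈ T, Tendsto (fun l => ∫ y, f y ∂νs l) atTop (𝓝 (∫ y, f y ∂ν))) →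
          Tendsto νs atTop (𝓝 ν) := by
  let := pseudoMetrizableSpacePseudoMetric W
  set B := countableBasis W
  have hfin : {s : Finset (Set W) | ↑s ⊆ B}.Countable := by
    refine ((Set.countable_ofPred_finite_subset (countable_countableBasis W)).preimage
      Finset.coe_injective).mono fun s hs => ?_
    exact ⟨s.finite_toSet, hs⟩
  refine ⟨(fun p : Finset (Set W) × ℕ => openApprox (⋃ t ∈ p.1, t) p.2) ''
    ({s : Finset (Set W) | ↑s ⊆ B} ×ˢ Set.univ), (hfin.prod Set.countable_univ).image _,
    fun h => ?_⟩
  exact tendsto_of_forall_tendsto_integral_openApprox (isBasis_countableBasis W)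
    fun s hs m => h _ ⟨(s, m), ⟨hs, trivial⟩, rfl⟩

/-- if the measures `m_n := μ(dx) K_n(x,dy) K_n(x,dz)` converge weakly to
`m_∞ := μ(dx) K_∞(x,dy) K_∞(x,dz)` on `V × W × W`, then there is a subsequence along which,
for `μ`-almost every `x`, the kernels `K_n(x, ·)` converge weakly to `K_∞(x, ·)`. -/
theorem stmt_0
    {V W : Type*}
    [TopologicalSpace V] [PolishSpace V] [MeasurableSpace V] [BorelSpace V]
    [TopologicalSpace W] [PolishSpace W] [MeasurableSpace W] [BorelSpace W]
    (μ : Measure V) [IsProbabilityMeasure μ]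
    (K : ℕ → Kernel V W) (Kinf : Kernel V W)
    [∀ n, IsMarkovKernel (K n)] [IsMarkovKernel Kinf]
    (hconv : ∀ f : BoundedContinuousFunction (V × W × W) ℝ,
      Tendsto (fun n => ∫ p, f p ∂(μ ⊗ₘ ((K n) ×ₖ (K n)))) atTop
        (nhds (∫ p, f p ∂(μ ⊗ₘ (Kinf ×ₖ Kinf))))) :
    ∃ φ : ℕ → ℕ, StrictMono φ ∧
      ∀ᵐ x ∂μ, ∀ g : BoundedContinuousFunction W ℝ,
        Tendsto (fun l => ∫ y, g y ∂(K (φ l) x)) atTop (nhds (∫ y, g y ∂(Kinf x))) := by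
  obtain ⟨T, hT, hdet⟩ := exists_countable_tendsto_of_forall_tendsto_integral W
  have : Countable T := hT.to_subtype
  obtain ⟨φ, hφ, hae⟩ := exists_seq_forall_tendsto_ae_of_tendstoInMeasure
    fun f : T => tendstoInMeasure_integral_kernel hconv (f : W →ᵇ ℝ)
  refine ⟨φ, hφ, ?_⟩
  filter_upwards [hae] with x hx
  exact ProbabilityMeasure.tendsto_iff_forall_integral_tendsto.1
    (hdet (ν := ⟨Kinf x, inferInstance⟩) (νs := fun l => ⟨K (φ l) x, inferInstance⟩)
      fun f hf => hx ⟨f, hf⟩)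
end

section
/- Assume that the sequence (m_n)_{n∈ℕ} converges weakly to m_∞ on V × W × W (i.e. integrals of every bounded continuous real function converge). Then for every bounded continuous g : W → ℝ, the functions K_n[g] converge to K_∞[g] strongly in L²(μ), i.e. lim_{n→∞} ∫_V (K_n[g](x) − K_∞[g](x))² μ(dx) = 0. -/
open MeasureTheory ProbabilityTheory Filter BoundedContinuousFunction
open scoped ProbabilityTheory NNReal Topology

/-!
Write `Fₙ = Kₙ[g]` and `F = K_∞[g]`, and expand `∫ (Fₙ - F)² = ∫ Fₙ² - 2 ∫ F Fₙ + ∫ F²`.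
Testing the weak convergence against `g(y) g(z)` gives `∫ Fₙ² → ∫ F²`, and testing it against
`h(x) g(y)` gives `∫ h Fₙ → ∫ h F` for every bounded continuous `h`. Since the `Fₙ` are bounded
by `‖g‖` uniformly in `n`, the latter extends to `h = F`, which is in `L¹(μ)` and hence an
`L¹`-limit of bounded continuous functions. So `∫ (Fₙ - F)² → ∫ F² - 2 ∫ F² + ∫ F² = 0`.
-/

section L2

variable {α : Type*} [MeasurableSpace α] {μ : Measure α}

theorem tendsto_integral_sub_sq_of_tendsto {u : ℕ → α → ℝ} {v : α → ℝ}
    (hu : ∀ n, MemLp (u n) 2 μ) (hv : MemLp v 2 μ)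
    (hsq : Tendsto (fun n ↦ ∫ x, u n x ^ 2 ∂μ) atTop (𝓝 (∫ x, v x ^ 2 ∂μ)))
    (hmul : Tendsto (fun n ↦ ∫ x, v x * u n x ∂μ) atTop (𝓝 (∫ x, v x ^ 2 ∂μ))) :
    Tendsto (fun n ↦ ∫ x, (u n x - v x) ^ 2 ∂μ) atTop (𝓝 0) := by
  have expand : ∀ n, ∫ x, (u n x - v x) ^ 2 ∂μ
      = ∫ x, u n x ^ 2 ∂μ - 2 * ∫ x, v x * u n x ∂μ + ∫ x, v x ^ 2 ∂μ := by
    intro n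
    have hvu : Integrable (fun x ↦ 2 * (v x * u n x)) μ := (hv.integrable_mul (hu n)).const_mul 2
    have hdiff : Integrable (fun x ↦ u n x ^ 2 - 2 * (v x * u n x)) μ :=
      (hu n).integrable_sq.sub hvu
    calc ∫ x, (u n x - v x) ^ 2 ∂μ = ∫ x, (u n x ^ 2 - 2 * (v x * u n x)) + v x ^ 2 ∂μ := by
          congr 1 with x; ring
      _ = _ := by
          rw [integral_add hdiff hv.integrable_sq, integral_sub (hu n).integrable_sq hvu,
            integral_const_mul]
  simp_rw [expand]
  convert (hsq.sub (hmul.const_mul 2)).add tendsto_const_nhds using 2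
  ring

end L2

section Density

variable {α : Type*} [MeasurableSpace α] {μ : Measure α}

theorem norm_integral_mul_sub_integral_mul_le {f φ w : α → ℝ} {C : ℝ}
    (hf : Integrable f μ) (hφ : Integrable φ μ) (hw : AEStronglyMeasurable w μ)
    (hw_bdd : ∀ᵐ x ∂μ, ‖w x‖ ≤ C) :
    ‖∫ x, f x * w x ∂μ - ∫ x, φ x * w x ∂μ‖ ≤ C * ∫ x, ‖f x - φ x‖ ∂μ := by
  rw [← integral_sub (hf.mul_bdd hw hw_bdd) (hφ.mul_bdd hw hw_bdd), ← integral_const_mul]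
  refine norm_integral_le_of_norm_le ((hf.sub hφ).norm.const_mul C) ?_
  filter_upwards [hw_bdd] with x hx
  rw [← sub_mul, norm_mul, mul_comm]
  exact mul_le_mul_of_nonneg_right hx (norm_nonneg _)

variable [TopologicalSpace α] [NormalSpace α] [BorelSpace α] [μ.WeaklyRegular]

theorem tendsto_integral_mul_of_forall_boundedContinuous_s1 {u : ℕ → α → ℝ} {v : α → ℝ} {C : ℝ≥0}
    (hu : ∀ n, AEStronglyMeasurable (u n) μ) (hv : AEStronglyMeasurable v μ)
    (hu_bdd : ∀ n, ∀ᵐ x ∂μ, ‖u n x‖ ≤ C) (hv_bdd : ∀ᵐ x ∂μ, ‖v x‖ ≤ C)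
    (htest : ∀ φ : α →ᵇ ℝ,
      Tendsto (fun n ↦ ∫ x, φ x * u n x ∂μ) atTop (𝓝 (∫ x, φ x * v x ∂μ)))
    {f : α → ℝ} (hf : Integrable f μ) :
    Tendsto (fun n ↦ ∫ x, f x * u n x ∂μ) atTop (𝓝 (∫ x, f x * v x ∂μ)) := by
  rw [Metric.tendsto_atTop]
  intro ε hε
  obtain ⟨δ, hδ, hCδ⟩ := exists_pos_mul_lt (by positivity : 0 < ε / 3) (C : ℝ)
  obtain ⟨φ, hfφ, hφ⟩ := hf.exists_boundedContinuous_integral_sub_le hδ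
  have approx : ∀ w : α → ℝ, AEStronglyMeasurable w μ → (∀ᵐ x ∂μ, ‖w x‖ ≤ C) →
      dist (∫ x, f x * w x ∂μ) (∫ x, φ x * w x ∂μ) < ε / 3 := fun w hw hw_bdd ↦
    calc _ ≤ C * ∫ x, ‖f x - φ x‖ ∂μ :=
          norm_integral_mul_sub_integral_mul_le hf hφ hw hw_bdd
      _ ≤ C * δ := by gcongr
      _ < ε / 3 := hCδ
  obtain ⟨N, hN⟩ := Metric.tendsto_atTop.mp (htest φ) (ε / 3) (by positivity)
  refine ⟨N, fun n hn ↦ ?_⟩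
  calc dist (∫ x, f x * u n x ∂μ) (∫ x, f x * v x ∂μ)
      ≤ dist (∫ x, f x * u n x ∂μ) (∫ x, φ x * u n x ∂μ)
        + dist (∫ x, φ x * u n x ∂μ) (∫ x, φ x * v x ∂μ)
        + dist (∫ x, φ x * v x ∂μ) (∫ x, f x * v x ∂μ) := dist_triangle4 _ _ _ _
    _ < ε / 3 + ε / 3 + ε / 3 := by
      gcongr
      · exact approx _ (hu n) (hu_bdd n)
      · exact hN n hn
      · rw [dist_comm]; exact approx _ hv hv_bdd
    _ = ε := by ring

end Density

section Kernel

variable {V W : Type*} [TopologicalSpace V] [TopologicalSpace W]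

def BoundedContinuousFunction.tripleMul (h : V →ᵇ ℝ) (g g' : W →ᵇ ℝ) : V × W × W →ᵇ ℝ :=
  h.compContinuous .fst * g.compContinuous (.comp .fst .snd) *
    g'.compContinuous (.comp .snd .snd)

@[simp]
theorem BoundedContinuousFunction.tripleMul_apply (h : V →ᵇ ℝ) (g g' : W →ᵇ ℝ)
    (p : V × W × W) : tripleMul h g g' p = h p.1 * g p.2.1 * g' p.2.2 :=
  rfl

variable [MeasurableSpace V] [OpensMeasurableSpace V] [MeasurableSpace W] [OpensMeasurableSpace W]

theorem integral_tripleMul_compProd (μ : Measure V) [IsFiniteMeasure μ]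
    (κ η : Kernel V W) [IsFiniteKernel κ] [IsFiniteKernel η] (h : V →ᵇ ℝ) (g g' : W →ᵇ ℝ) :
    ∫ p, tripleMul h g g' p ∂(μ ⊗ₘ (κ ×ₖ η))
      = ∫ x, h x * (∫ y, g y ∂κ x) * ∫ z, g' z ∂η x ∂μ := by
  have hint : Integrable (tripleMul h g g') (μ ⊗ₘ (κ ×ₖ η)) := by
    have hmeas : Measurable (tripleMul h g g') := by
      change Measurable fun p : V × W × W ↦ h p.1 * g p.2.1 * g' p.2.2
      fun_prop
    exact .of_bound hmeas.aestronglyMeasurable _ (ae_of_all _ (norm_coe_le_norm _))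
  rw [Measure.integral_compProd hint]
  congr 1 with x
  simp only [Kernel.prod_apply, tripleMul_apply]
  rw [integral_prod_mul (fun y ↦ h x * g y) g', integral_const_mul]

end Kernel

theorem stmt_1_general
    {V W : Type*}
    [TopologicalSpace V] [PolishSpace V] [MeasurableSpace V] [BorelSpace V]
    [TopologicalSpace W] [MeasurableSpace W] [BorelSpace W]
    (μ : Measure V) [IsProbabilityMeasure μ]
    (K : ℕ → Kernel V W) (Kinf : Kernel V W)
    [∀ n, IsMarkovKernel (K n)] [IsMarkovKernel Kinf]
    (hconv : ∀ f : BoundedContinuousFunction (V × W × W) ℝ,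
      Tendsto (fun n => ∫ p, f p ∂(μ ⊗ₘ ((K n) ×ₖ (K n)))) atTop
        (nhds (∫ p, f p ∂(μ ⊗ₘ (Kinf ×ₖ Kinf))))) :
    ∀ g : BoundedContinuousFunction W ℝ,
      Tendsto (fun n => ∫ x, ((∫ y, g y ∂(K n x)) - (∫ y, g y ∂(Kinf x))) ^ 2 ∂μ)
        atTop (nhds 0) := by
  intro g
  -- a compatible metric makes `V` normal and `μ` weakly regular
  let := TopologicalSpace.upgradeIsCompletelyMetrizable V
  have hmeas (κ : Kernel V W) : AEStronglyMeasurable (fun x ↦ ∫ y, g y ∂κ x) μ :=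
    g.continuous.stronglyMeasurable.integral_kernel.aestronglyMeasurable
  have hbdd (κ : Kernel V W) [IsMarkovKernel κ] : ∀ᵐ x ∂μ, ‖∫ y, g y ∂κ x‖ ≤ ‖g‖₊ :=
    ae_of_all _ fun x ↦ g.norm_integral_le_norm (μ := κ x)
  have hmemLp (κ : Kernel V W) [IsMarkovKernel κ] : MemLp (fun x ↦ ∫ y, g y ∂κ x) 2 μ :=
    .of_bound (hmeas κ) _ (hbdd κ)
  have hsq := hconv (tripleMul 1 g g)
  have htest (φ : V →ᵇ ℝ) := hconv (tripleMul φ g 1)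
  simp only [integral_tripleMul_compProd, coe_one, Pi.one_apply, one_mul, ← sq] at hsq
  simp only [integral_tripleMul_compProd, coe_one, Pi.one_apply, integral_const, mul_one,
    probReal_univ, smul_eq_mul] at htest
  have hmul := tendsto_integral_mul_of_forall_boundedContinuous_s1 (fun n ↦ hmeas (K n))
    (hmeas Kinf) (fun n ↦ hbdd (K n)) (hbdd Kinf) htest ((hmemLp Kinf).integrable one_le_two)
  simp only [← sq] at hmul
  exact tendsto_integral_sub_sq_of_tendsto (fun n ↦ hmemLp (K n)) (hmemLp Kinf) hsq hmul

/-- if the measures `m_n := μ(dx) K_n(x,dy) K_n(x,dz)` converge weakly to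
`m_∞`, then for every bounded continuous `g : W → ℝ` the functions `K_n[g]` converge to
`K_∞[g]` strongly in `L²(μ)`. -/
theorem stmt_1
    {V W : Type*}
    [TopologicalSpace V] [PolishSpace V] [MeasurableSpace V] [BorelSpace V]
    [TopologicalSpace W] [PolishSpace W] [MeasurableSpace W] [BorelSpace W]
    (μ : Measure V) [IsProbabilityMeasure μ]
    (K : ℕ → Kernel V W) (Kinf : Kernel V W)
    [∀ n, IsMarkovKernel (K n)] [IsMarkovKernel Kinf]
    (hconv : ∀ f : BoundedContinuousFunction (V × W × W) ℝ,
      Tendsto (fun n => ∫ p, f p ∂(μ ⊗ₘ ((K n) ×ₖ (K n)))) atTop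
        (nhds (∫ p, f p ∂(μ ⊗ₘ (Kinf ×ₖ Kinf))))) :
    ∀ g : BoundedContinuousFunction W ℝ,
      Tendsto (fun n => ∫ x, ((∫ y, g y ∂(K n x)) - (∫ y, g y ∂(Kinf x))) ^ 2 ∂μ)
        atTop (nhds 0) :=
  stmt_1_general μ K Kinf hconv
end

section
/- Let f : [0,∞) → ℝ be continuous with f(0) ≥ 0. Define y(t) := −min(0, min_{0≤s≤t} f(s)). Then y is continuous, nondecreasing, y(0) = 0, f(t) + y(t) ≥ 0 for all t ≥ 0, and y is constant on every interval on which f + y is strictly positive; in other words, y solves the Skorokhod problem for f. -/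
/-!
Write `m t = inf_{[0,t]} f`, so that `y = -min 0 m`. Rescaling `[0,t]` to `[0,1]` turns `m` into
an infimum over a fixed compact set of a jointly continuous function of `(t, s)`, hence `m` and `y`
are continuous; `m` is antitone and `m ≤ f`, which gives monotonicity of `y` and `f + y ≥ 0`.
If `y` increases between `a` and `t`, the new value `m t < min 0 (m a)` is the minimum of `f` over
`[a, t]`, attained at some `s`, and then `f s + y s = f s - m s = 0`.
-/

open Set

section RunningInf

variable {f : ℝ → ℝ} {x : ℝ}

theorem image_affine_Icc_zero_one {t : ℝ} (hxt : x ≤ t) :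
    (fun s => x + (t - x) * s) '' Icc 0 1 = Icc x t := by
  rw [← image_image (x + ·) ((t - x) * ·), image_mul_left_Icc (sub_nonneg.2 hxt) zero_le_one,
    image_const_add_Icc]
  simp

theorem ContinuousOn.continuousOn_sInf_image_Icc (hf : ContinuousOn f (Ici x)) :
    ContinuousOn (fun t => sInf (f '' Icc x t)) (Ici x) := by
  set g : ℝ → ℝ := fun u => f (max x u)
  have hg : Continuous g :=
    hf.comp_continuous (continuous_const.max continuous_id) fun u => le_max_left x u
  have hF : Continuous fun p : ℝ × ℝ => g (x + (p.1 - x) * p.2) := hg.comp (by fun_prop)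
  refine ((isCompact_Icc (a := (0 : ℝ)) (b := 1)).continuous_sInf
    (f := fun t s => g (x + (t - x) * s)) hF).continuousOn.congr fun t (ht : x ≤ t) => ?_
  have hfg : EqOn f g (Icc x t) := fun u hu => by simp [g, max_eq_right hu.1]
  simp only
  rw [hfg.image_eq, ← image_affine_Icc_zero_one ht, image_image]

theorem ContinuousOn.antitoneOn_sInf_image_Icc (hf : ContinuousOn f (Ici x)) :
    AntitoneOn (fun t => sInf (f '' Icc x t)) (Ici x) := fun _ ha _ _ hab =>
  csInf_le_csInf (isCompact_Icc.bddBelow_image (hf.mono Icc_subset_Ici_self))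
    ((nonempty_Icc.2 ha).image f) (image_mono (Icc_subset_Icc_right hab))

theorem ContinuousOn.sInf_image_Icc_eq_min {a b : ℝ} (hf : ContinuousOn f (Icc x b))
    (hxa : x ≤ a) (hab : a ≤ b) :
    sInf (f '' Icc x b) = min (sInf (f '' Icc x a)) (sInf (f '' Icc a b)) := by
  rw [← Icc_union_Icc_eq_Icc hxa hab, image_union]
  exact csInf_union (isCompact_Icc.bddBelow_image (hf.mono (Icc_subset_Icc_right hab)))
    ((nonempty_Icc.2 hxa).image f)
    (isCompact_Icc.bddBelow_image (hf.mono (Icc_subset_Icc_left hxa)))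
    ((nonempty_Icc.2 hab).image f)

end RunningInf

noncomputable def skorokhodReflection (f : ℝ → ℝ) (t : ℝ) : ℝ :=
  -(min 0 (sInf (f '' Icc 0 t)))

section SkorokhodReflection

variable {f : ℝ → ℝ}

theorem skorokhodReflection_zero (hf0 : 0 ≤ f 0) : skorokhodReflection f 0 = 0 := by
  rw [skorokhodReflection, Icc_self, image_singleton, csInf_singleton, min_eq_left hf0, neg_zero]

theorem continuousOn_skorokhodReflection (hf : ContinuousOn f (Ici 0)) :
    ContinuousOn (skorokhodReflection f) (Ici 0) :=
  (continuousOn_const.inf hf.continuousOn_sInf_image_Icc).neg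

theorem monotoneOn_skorokhodReflection (hf : ContinuousOn f (Ici 0)) :
    MonotoneOn (skorokhodReflection f) (Ici 0) :=
  fun _ ha _ hb hab => neg_le_neg (min_le_min_left 0 (hf.antitoneOn_sInf_image_Icc ha hb hab))

theorem add_skorokhodReflection_nonneg (hf : ContinuousOn f (Ici 0)) {t : ℝ} (ht : 0 ≤ t) :
    0 ≤ f t + skorokhodReflection f t := by
  have := (hf.mono Icc_subset_Ici_self).sInf_image_Icc_le ⟨ht, le_rfl⟩
  have := min_le_right 0 (sInf (f '' Icc 0 t))
  rw [skorokhodReflection]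
  linarith

theorem exists_add_skorokhodReflection_eq_zero (hf : ContinuousOn f (Ici 0))
    {a t : ℝ} (ha : 0 ≤ a) (hat : a ≤ t)
    (hlt : skorokhodReflection f a < skorokhodReflection f t) :
    ∃ s ∈ Icc a t, f s + skorokhodReflection f s = 0 := by
  set m : ℝ → ℝ := fun t => sInf (f '' Icc 0 t)
  have hmin : m t < min 0 (m a) := by
    have hlt' : min 0 (m t) < min 0 (m a) := neg_lt_neg_iff.1 hlt
    exact (min_lt_iff.1 hlt').resolve_left (min_le_left 0 (m a)).not_gt
  obtain ⟨hmt_neg, hmta⟩ := lt_min_iff.1 hmin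
  obtain ⟨s, hs, hfs⟩ := isCompact_Icc.exists_sInf_image_eq (nonempty_Icc.2 hat)
    (hf.mono fun u hu => ha.trans hu.1)
  have hsplit : m t = min (m a) (sInf (f '' Icc a t)) :=
    (hf.mono Icc_subset_Ici_self).sInf_image_Icc_eq_min ha hat
  have hmt : m t = f s := by
    rw [← hfs, hsplit, min_eq_right]
    rw [hsplit, min_lt_iff] at hmta
    exact (hmta.resolve_left (lt_irrefl _)).le
  have hsa : 0 ≤ s := ha.trans hs.1
  have hms : m s = m t := le_antisymm
    (hmt ▸ (hf.mono Icc_subset_Ici_self).sInf_image_Icc_le ⟨hsa, le_rfl⟩)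
    (hf.antitoneOn_sInf_image_Icc hsa (hsa.trans hs.2) hs.2)
  refine ⟨s, hs, ?_⟩
  show f s + -(min 0 (m s)) = 0
  rw [hms, min_eq_right hmt_neg.le, hmt]
  ring

end SkorokhodReflection

/-- for a continuous `f : [0,∞) → ℝ` with `f 0 ≥ 0`, the function
`y(t) := −min(0, min_{0≤s≤t} f(s))` solves the Skorokhod problem for `f`: it is
continuous, nondecreasing, starts at `0`, keeps `f + y ≥ 0`, and is constant on every
interval on which `f + y` is strictly positive. -/
theorem stmt_6
    (f : ℝ → ℝ) (hf : ContinuousOn f (Ici 0)) (hf0 : 0 ≤ f 0)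
    (y : ℝ → ℝ) (hy : ∀ t, y t = -(min 0 (sInf (f '' Icc 0 t)))) :
    ContinuousOn y (Ici 0) ∧
    MonotoneOn y (Ici 0) ∧
    y 0 = 0 ∧
    (∀ t ∈ Ici (0 : ℝ), 0 ≤ f t + y t) ∧
    (∀ a b : ℝ, 0 ≤ a → a ≤ b → (∀ t ∈ Icc a b, 0 < f t + y t) →
      ∀ t ∈ Icc a b, y t = y a) := by
  obtain rfl : y = skorokhodReflection f := funext hy
  refine ⟨continuousOn_skorokhodReflection hf, monotoneOn_skorokhodReflection hf,
    skorokhodReflection_zero hf0, fun t ht => add_skorokhodReflection_nonneg hf ht, ?_⟩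
  intro a b ha _ hpos t ht
  refine ((monotoneOn_skorokhodReflection hf ha (ha.trans ht.1) ht.1).eq_or_lt).elim Eq.symm
    fun hlt => ?_
  obtain ⟨s, hs, hzero⟩ := exists_add_skorokhodReflection_eq_zero hf ha ht.1 hlt
  exact absurd hzero (hpos s ⟨hs.1, hs.2.trans ht.2⟩).ne'
end

section
/- If f ∈ 𝓡, then for every t ≥ 0 the function P_t[f] belongs to 𝓡. Consequently, for every f ∈ 𝓡 and every x ∈ V, the map [0,∞) ∋ t ↦ P_t[f](x) is right-continuous. -/
open MeasureTheory ProbabilityTheory Filter Topology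

/-! Both claims reduce to right-continuity of `u ↦ P_u[f](x)` at every `t ≥ 0`. By the semigroup
property `P_{t+s}[f](x) = ∫ P_s[f] d(P_t x)`, and since `P_s[f] → f` pointwise as `s → 0⁺` with
`|P_s[f]| ≤ sup |f|`, dominated convergence under the probability measure `P_t x` gives
`P_{t+s}[f](x) → P_t[f](x)`. Stability of `𝓡` follows because `P_s[P_t[f]] = P_{s+t}[f]`. -/

lemma norm_integral_le_of_forall_abs_le {α : Type*} [MeasurableSpace α] {μ : Measure α}
    [IsProbabilityMeasure μ] {f : α → ℝ} {C : ℝ} (h : ∀ a, |f a| ≤ C) :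
    ‖∫ a, f a ∂μ‖ ≤ C := by
  simpa using norm_integral_le_of_norm_le_const (μ := μ)
    (Eventually.of_forall fun a ↦ (Real.norm_eq_abs (f a)).trans_le (h a))

lemma tendsto_integral_integral_kernel {ι α : Type*} [MeasurableSpace α] {l : Filter ι}
    [l.IsCountablyGenerated] {κ : ι → Kernel α α} [∀ i, IsMarkovKernel (κ i)]
    {μ : Measure α} [IsFiniteMeasure μ] {f : α → ℝ} (hfm : Measurable f)
    (hfb : ∃ C, ∀ a, |f a| ≤ C)
    (hlim : ∀ a, Tendsto (fun i ↦ ∫ b, f b ∂(κ i a)) l (𝓝 (f a))) :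
    Tendsto (fun i ↦ ∫ a, ∫ b, f b ∂(κ i a) ∂μ) l (𝓝 (∫ a, f a ∂μ)) := by
  obtain ⟨C, hC⟩ := hfb
  have hmeas i : StronglyMeasurable fun a ↦ ∫ b, f b ∂(κ i a) :=
    hfm.stronglyMeasurable.integral_kernel
  exact tendsto_integral_filter_of_norm_le_const
    (Eventually.of_forall fun i ↦ (hmeas i).aestronglyMeasurable)
    ⟨C, Eventually.of_forall fun i ↦ ae_of_all _ fun a ↦ norm_integral_le_of_forall_abs_le hC⟩
    (ae_of_all _ hlim)

lemma tendsto_nhdsGE_of_tendsto_add_nhdsGT {α β : Type*} [TopologicalSpace α] [AddCommGroup α]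
    [PartialOrder α] [IsOrderedAddMonoid α] [ContinuousAdd α] [TopologicalSpace β]
    {g : α → β} {t : α} (h : Tendsto (fun s ↦ g (t + s)) (𝓝[>] 0) (𝓝 (g t))) :
    Tendsto g (𝓝[≥] t) (𝓝 (g t)) := by
  have hmap : map (t + ·) (𝓝[>] (0 : α)) = 𝓝[>] t := by
    rw [Filter.map_add_left_nhdsGT, add_zero]
  refine continuousWithinAt_Ioi_iff_Ici.mp ?_
  rw [ContinuousWithinAt, ← hmap, tendsto_map'_iff]
  exact h

lemma tendsto_integral_semigroup_add_nhdsGT {V : Type*} [MeasurableSpace V]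
    {P : ℝ → Kernel V V} [∀ t, IsMarkovKernel (P t)]
    (hsemi : ∀ s t : ℝ, 0 ≤ s → 0 ≤ t → ∀ f : V → ℝ,
      Measurable f → (∃ C, ∀ v, |f v| ≤ C) →
      ∀ x, ∫ y, f y ∂(P (t + s) x) = ∫ y, (∫ z, f z ∂(P s y)) ∂(P t x))
    {f : V → ℝ} (hfm : Measurable f) (hfb : ∃ C, ∀ v, |f v| ≤ C)
    (hfR : ∀ x, Tendsto (fun t : ℝ ↦ ∫ y, f y ∂(P t x)) (𝓝[>] 0) (𝓝 (f x)))
    {t : ℝ} (ht : 0 ≤ t) (x : V) :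
    Tendsto (fun s ↦ ∫ y, f y ∂(P (t + s) x)) (𝓝[>] 0) (𝓝 (∫ y, f y ∂(P t x))) := by
  refine (tendsto_integral_integral_kernel hfm hfb hfR).congr' ?_
  filter_upwards [self_mem_nhdsWithin] with s hs
  exact (hsemi s t (le_of_lt hs) ht f hfm hfb x).symm

theorem stmt_9_general
    {V : Type*} [MeasurableSpace V]
    (P : ℝ → Kernel V V) [∀ t, IsMarkovKernel (P t)]
    (hsemi : ∀ s t : ℝ, 0 ≤ s → 0 ≤ t → ∀ f : V → ℝ,
      Measurable f → (∃ C, ∀ v, |f v| ≤ C) →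
      ∀ x, ∫ y, f y ∂(P (t + s) x) = ∫ y, (∫ z, f z ∂(P s y)) ∂(P t x))
    (f : V → ℝ) (hfm : Measurable f) (hfb : ∃ C, ∀ v, |f v| ≤ C)
    (hfR : ∀ x, Tendsto (fun t : ℝ => ∫ y, f y ∂(P t x))
      (nhdsWithin 0 (Set.Ioi 0)) (nhds (f x))) :
    (∀ t : ℝ, 0 ≤ t →
      (∀ x, ∫ y, (∫ z, f z ∂(P t y)) ∂(P 0 x) = ∫ z, f z ∂(P t x)) ∧
      (∀ x, Tendsto (fun s : ℝ => ∫ y, (∫ z, f z ∂(P t y)) ∂(P s x))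
        (nhdsWithin 0 (Set.Ioi 0)) (nhds (∫ z, f z ∂(P t x))))) ∧
    (∀ x, ∀ t : ℝ, 0 ≤ t →
      Tendsto (fun u : ℝ => ∫ y, f y ∂(P u x))
        (nhdsWithin t (Set.Ici t)) (nhds (∫ y, f y ∂(P t x)))) := by
  have hright := fun {t} (ht : 0 ≤ t) x ↦
    tendsto_integral_semigroup_add_nhdsGT hsemi hfm hfb hfR ht x
  refine ⟨fun t ht ↦ ⟨fun x ↦ ?_, fun x ↦ ?_⟩,
    fun x t ht ↦ tendsto_nhdsGE_of_tendsto_add_nhdsGT (hright ht x)⟩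
  · simpa using (hsemi t 0 ht le_rfl f hfm hfb x).symm
  · refine (hright ht x).congr' ?_
    filter_upwards [self_mem_nhdsWithin] with s hs
    rw [add_comm]
    exact hsemi t s ht (le_of_lt hs) f hfm hfb x

/-- the class `𝓡` (bounded measurable functions `f` with `P_0[f] = f` and
`P_t[f](x) → f(x)` as `t → 0⁺` for every `x`) is stable under the semigroup:
if `f ∈ 𝓡` then `P_t[f] ∈ 𝓡` for every `t ≥ 0`; consequently, for every `f ∈ 𝓡` and
`x`, the map `t ↦ P_t[f](x)` is right-continuous on `[0,∞)`. -/
theorem stmt_9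
    {V : Type*} [MeasurableSpace V]
    (P : ℝ → Kernel V V) [∀ t, IsMarkovKernel (P t)]
    (hsemi : ∀ s t : ℝ, 0 ≤ s → 0 ≤ t → ∀ f : V → ℝ,
      Measurable f → (∃ C, ∀ v, |f v| ≤ C) →
      ∀ x, ∫ y, f y ∂(P (t + s) x) = ∫ y, (∫ z, f z ∂(P s y)) ∂(P t x))
    (f : V → ℝ) (hfm : Measurable f) (hfb : ∃ C, ∀ v, |f v| ≤ C)
    (hf0 : ∀ x, ∫ y, f y ∂(P 0 x) = f x)
    (hfR : ∀ x, Tendsto (fun t : ℝ => ∫ y, f y ∂(P t x))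
      (nhdsWithin 0 (Set.Ioi 0)) (nhds (f x))) :
    (∀ t : ℝ, 0 ≤ t →
      (∀ x, ∫ y, (∫ z, f z ∂(P t y)) ∂(P 0 x) = ∫ z, f z ∂(P t x)) ∧
      (∀ x, Tendsto (fun s : ℝ => ∫ y, (∫ z, f z ∂(P t y)) ∂(P s x))
        (nhdsWithin 0 (Set.Ioi 0)) (nhds (∫ z, f z ∂(P t x))))) ∧
    (∀ x, ∀ t : ℝ, 0 ≤ t →
      Tendsto (fun u : ℝ => ∫ y, f y ∂(P u x))
        (nhdsWithin t (Set.Ici t)) (nhds (∫ y, f y ∂(P t x)))) :=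
  stmt_9_general P hsemi f hfm hfb hfR
end

section
/- Let f and g be bounded measurable real functions on V with g ∈ 𝓡, such that for every x ∈ V the map s ↦ P_s[g](x) is measurable and P_t[f](x) − f(x) = ∫_0^t P_s[g](x) ds for all t ≥ 0 and x ∈ V. Then for every x ∈ V, lim_{t→0⁺} (P_t[f](x) − f(x))/t = g(x). In particular, a function g ∈ 𝓡 satisfying this integral relation with f is uniquely determined by f. -/
open MeasureTheory ProbabilityTheory Filter Set Topology

/-! The one-sided fundamental theorem of calculus needs only the right limit of the integrand:
since `s ↦ P_s[g](x)` tends to `g x` as `s → 0⁺`, the map `t ↦ ∫_0^t P_s[g](x) ds`, which is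
`P_t[f](x) - f x`, has right derivative `g x` at `0`. Uniqueness of limits then pins down `g`. -/

theorem tendsto_intervalIntegral_div_nhdsGT_zero {h : ℝ → ℝ} {L : ℝ} (hm : Measurable h)
    (hL : Tendsto h (𝓝[>] 0) (𝓝 L)) :
    Tendsto (fun t => (∫ s in (0 : ℝ)..t, h s) / t) (𝓝[>] 0) (𝓝 L) := by
  have hderiv : HasDerivWithinAt (fun u => ∫ s in (0 : ℝ)..u, h s) L (Ici 0) 0 :=
    intervalIntegral.integral_hasDerivWithinAt_of_tendsto_ae_right IntervalIntegrable.refl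
      hm.aestronglyMeasurable.stronglyMeasurableAtFilter (hL.mono_left inf_le_left)
  rw [hasDerivWithinAt_iff_tendsto_slope, Ici_sdiff_left] at hderiv
  refine hderiv.congr fun t => ?_
  simp [slope_def_field]

theorem tendsto_kernel_integral_sub_div_of_eq_intervalIntegral {V : Type*} [MeasurableSpace V]
    {P : ℝ → Kernel V V} {f g : V → ℝ} {x : V}
    (hgR : Tendsto (fun t : ℝ => ∫ y, g y ∂(P t x)) (𝓝[>] 0) (𝓝 (g x)))
    (hgmeas : Measurable fun s : ℝ => ∫ y, g y ∂(P s x))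
    (hint : ∀ t : ℝ, 0 < t → (∫ y, f y ∂(P t x)) - f x = ∫ s in (0:ℝ)..t, ∫ y, g y ∂(P s x)) :
    Tendsto (fun t : ℝ => ((∫ y, f y ∂(P t x)) - f x) / t) (𝓝[>] 0) (𝓝 (g x)) := by
  refine (tendsto_intervalIntegral_div_nhdsGT_zero hgmeas hgR).congr' ?_
  filter_upwards [self_mem_nhdsWithin] with t ht
  rw [hint t ht]

theorem stmt_10_general
    {V : Type*} [MeasurableSpace V]
    (P : ℝ → Kernel V V)
    (f g : V → ℝ)
    (hgR : ∀ x, Tendsto (fun t : ℝ => ∫ y, g y ∂(P t x))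
      (nhdsWithin 0 (Set.Ioi 0)) (nhds (g x)))
    (hgmeas : ∀ x, Measurable fun s : ℝ => ∫ y, g y ∂(P s x))
    (hint : ∀ x, ∀ t : ℝ, 0 ≤ t →
      (∫ y, f y ∂(P t x)) - f x = ∫ s in (0:ℝ)..t, ∫ y, g y ∂(P s x)) :
    (∀ x, Tendsto (fun t : ℝ => ((∫ y, f y ∂(P t x)) - f x) / t)
      (nhdsWithin 0 (Set.Ioi 0)) (nhds (g x))) ∧
    (∀ g' : V → ℝ, Measurable g' → (∃ C, ∀ v, |g' v| ≤ C) →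
      (∀ x, ∫ y, g' y ∂(P 0 x) = g' x) →
      (∀ x, Tendsto (fun t : ℝ => ∫ y, g' y ∂(P t x))
        (nhdsWithin 0 (Set.Ioi 0)) (nhds (g' x))) →
      (∀ x, Measurable fun s : ℝ => ∫ y, g' y ∂(P s x)) →
      (∀ x, ∀ t : ℝ, 0 ≤ t →
        (∫ y, f y ∂(P t x)) - f x = ∫ s in (0:ℝ)..t, ∫ y, g' y ∂(P s x)) →
      g' = g) := by
  have hderiv x := tendsto_kernel_integral_sub_div_of_eq_intervalIntegral (hgR x) (hgmeas x)
    fun t ht => hint x t ht.le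
  refine ⟨hderiv, fun g' _ _ _ hg'R hg'meas hint' => funext fun x => ?_⟩
  exact tendsto_nhds_unique (tendsto_kernel_integral_sub_div_of_eq_intervalIntegral (hg'R x)
    (hg'meas x) fun t ht => hint' x t ht.le) (hderiv x)

/-- if `f, g` are bounded measurable, `g ∈ 𝓡`, `s ↦ P_s[g](x)` is measurable
and `P_t[f](x) − f(x) = ∫_0^t P_s[g](x) ds` for all `t ≥ 0` and `x`, then
`(P_t[f](x) − f(x))/t → g(x)` as `t → 0⁺` for every `x`; in particular, a function
`g ∈ 𝓡` satisfying the integral relation with `f` is uniquely determined by `f`. -/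
theorem stmt_10
    {V : Type*} [MeasurableSpace V]
    (P : ℝ → Kernel V V) [∀ t, IsMarkovKernel (P t)]
    (hsemi : ∀ s t : ℝ, 0 ≤ s → 0 ≤ t → ∀ f : V → ℝ,
      Measurable f → (∃ C, ∀ v, |f v| ≤ C) →
      ∀ x, ∫ y, f y ∂(P (t + s) x) = ∫ y, (∫ z, f z ∂(P s y)) ∂(P t x))
    (f g : V → ℝ)
    (hfm : Measurable f) (hfb : ∃ C, ∀ v, |f v| ≤ C)
    (hgm : Measurable g) (hgb : ∃ C, ∀ v, |g v| ≤ C)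
    (hg0 : ∀ x, ∫ y, g y ∂(P 0 x) = g x)
    (hgR : ∀ x, Tendsto (fun t : ℝ => ∫ y, g y ∂(P t x))
      (nhdsWithin 0 (Set.Ioi 0)) (nhds (g x)))
    (hgmeas : ∀ x, Measurable fun s : ℝ => ∫ y, g y ∂(P s x))
    (hint : ∀ x, ∀ t : ℝ, 0 ≤ t →
      (∫ y, f y ∂(P t x)) - f x = ∫ s in (0:ℝ)..t, ∫ y, g y ∂(P s x)) :
    (∀ x, Tendsto (fun t : ℝ => ((∫ y, f y ∂(P t x)) - f x) / t)
      (nhdsWithin 0 (Set.Ioi 0)) (nhds (g x))) ∧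
    (∀ g' : V → ℝ, Measurable g' → (∃ C, ∀ v, |g' v| ≤ C) →
      (∀ x, ∫ y, g' y ∂(P 0 x) = g' x) →
      (∀ x, Tendsto (fun t : ℝ => ∫ y, g' y ∂(P t x))
        (nhdsWithin 0 (Set.Ioi 0)) (nhds (g' x))) →
      (∀ x, Measurable fun s : ℝ => ∫ y, g' y ∂(P s x)) →
      (∀ x, ∀ t : ℝ, 0 ≤ t →
        (∫ y, f y ∂(P t x)) - f x = ∫ s in (0:ℝ)..t, ∫ y, g' y ∂(P s x)) →
      g' = g) :=
  stmt_10_general P f g hgR hgmeas hint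
end
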